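/- Let π be a probability measure on [−1,1], and for A ∈ ℝ, d ≥ 0 define the tilted measure π_{(A,d)} by dπ_{(A,d)}/dπ(x) ∝ exp(Ax − c·(d/2)x²) for a fixed constant c. Then the 1-Wasserstein distance satisfies sup_{d≥0} d_{W₁}(π_{(A₁,d)}, π_{(A₂,d)}) ≤ C·|A₁ − A₂| for a universal constant C (one may take C = √2). -/

import Mathlib

open MeasureTheory

/-- The quadratic exponential tilt `dπ_{(A,d)}/dπ(x) ∝ exp(Ax - c(d/2)x²)`. -/
noncomputable def tilt (pi0 : Measure ℝ) (c d A : ℝ) : Measure ℝ :=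
  pi0.withDensity (fun x => ENNReal.ofReal
    (Real.exp (A * x - c * (d / 2) * x ^ 2)
      / ∫ y, Real.exp (A * y - c * (d / 2) * y ^ 2) ∂pi0))

/-!
Absorbing the quadratic factor into the base measure `ν = π.tilted (-c (d/2) x²)`, still a
probability measure on `[-1, 1]`, turns the tilts into the exponential family `A ↦ ν.tilted (A x)`.
Along this family `d/dA ∫ f = Cov(f, X)`, and for `f` 1-Lipschitz on `[-1, 1]` with `m = E X`,
`|Cov(f, X)| = |E[(f X - f 0)(X - m)]| ≤ E|X - m| ≤ 1 - m² ≤ 1`.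
The mean value theorem then gives the bound with constant `1 ≤ √2`.
-/

open ProbabilityTheory Real Set

section

variable {μ : Measure ℝ} {f g : ℝ → ℝ}

lemma ContinuousOn.integrable_of_ae_mem_Icc [IsFiniteMeasure μ] {a b : ℝ}
    (hf : ContinuousOn f (Icc a b)) (hμ : ∀ᵐ x ∂μ, x ∈ Icc a b) : Integrable f μ := by
  rw [← Measure.restrict_eq_self_of_ae_mem hμ]
  exact hf.integrableOn_Icc

lemma integral_abs_sub_integral_le_one [IsProbabilityMeasure μ]
    (hμ : ∀ᵐ x ∂μ, x ∈ Icc (-1 : ℝ) 1) : ∫ x, |x - ∫ y, y ∂μ| ∂μ ≤ 1 := by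
  set m := ∫ y, y ∂μ
  have hid : Integrable (fun x : ℝ => x) μ := continuousOn_id.integrable_of_ae_mem_Icc hμ
  have hm : m ∈ Icc (-1 : ℝ) 1 := by
    simpa [abs_le] using norm_integral_le_of_norm_le_const (f := fun x => x) (C := 1)
      (hμ.mono fun x hx => abs_le.2 hx)
  calc ∫ x, |x - m| ∂μ ≤ ∫ x, 1 - m * x ∂μ := by
        refine integral_mono_ae (hid.sub (integrable_const m)).abs
          ((integrable_const 1).sub (hid.const_mul m)) ?_
        filter_upwards [hμ] with x hx
        -- `1 - m x ∓ (x - m)` factors as `(1 ± m) (1 ∓ x)`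
        exact abs_le.2 ⟨by nlinarith [hx.1, hm.2], by nlinarith [hx.2, hm.1]⟩
    _ = 1 - m ^ 2 := by
        rw [integral_sub (integrable_const 1) (hid.const_mul m), integral_const_mul]
        simp [m, sq]
    _ ≤ 1 := by nlinarith [sq_nonneg m]

lemma covariance_id_eq_integral_mul_sub [IsProbabilityMeasure μ]
    (hμ : ∀ᵐ x ∂μ, x ∈ Icc (-1 : ℝ) 1) (hg : Integrable g μ) :
    cov[g, id; μ] = ∫ x, g x * (x - ∫ y, y ∂μ) ∂μ := by
  set m := ∫ y, y ∂μ
  have hid : Integrable (fun x : ℝ => x) μ := continuousOn_id.integrable_of_ae_mem_Icc hμ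
  have hcentered : Integrable (fun x : ℝ => x - m) μ := hid.sub (integrable_const m)
  have hgx : Integrable (fun x => g x * (x - m)) μ := by
    simpa only [mul_sub, Pi.sub_def] using (hg.mul_bdd (g := fun x => x) aestronglyMeasurable_id
      (hμ.mono fun x hx => abs_le.2 hx)).sub (hg.mul_const m)
  have hmean : ∫ x, (x - m) ∂μ = 0 := by
    rw [integral_sub hid (integrable_const m)]
    simp [m]
  simp only [covariance, id, sub_mul]
  rw [integral_sub hgx (hcentered.const_mul _), integral_const_mul, hmean, mul_zero, sub_zero]

lemma abs_covariance_id_le_of_lipschitzOnWith [IsProbabilityMeasure μ]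
    (hμ : ∀ᵐ x ∂μ, x ∈ Icc (-1 : ℝ) 1) (hf : LipschitzOnWith 1 f (Icc (-1 : ℝ) 1)) :
    |cov[f, id; μ]| ≤ 1 := by
  set m := ∫ y, y ∂μ
  have hfi : Integrable f μ := hf.continuousOn.integrable_of_ae_mem_Icc hμ
  have hf0 : ∀ᵐ x ∂μ, |f x - f 0| ≤ 1 := by
    filter_upwards [hμ] with x hx
    have := hf.dist_le_mul x hx 0 (by norm_num)
    rw [Real.dist_eq, Real.dist_eq, sub_zero, NNReal.coe_one, one_mul] at this
    exact this.trans (abs_le.2 hx)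
  have hid : Integrable (fun x : ℝ => x) μ := continuousOn_id.integrable_of_ae_mem_Icc hμ
  rw [← covariance_sub_const_left hfi (f 0),
    covariance_id_eq_integral_mul_sub hμ (g := fun x => f x - f 0) (hfi.sub (integrable_const _))]
  calc |∫ x, (f x - f 0) * (x - m) ∂μ| ≤ ∫ x, |(f x - f 0) * (x - m)| ∂μ :=
        abs_integral_le_integral_abs
    _ ≤ ∫ x, |x - m| ∂μ := by
        refine integral_mono_ae ?_ (hid.sub (integrable_const m)).abs ?_
        · exact ((hid.sub (integrable_const m)).bdd_mul
            (hfi.sub (integrable_const _)).aestronglyMeasurable hf0).abs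
        filter_upwards [hf0] with x hx
        rw [abs_mul]
        exact mul_le_of_le_one_left (abs_nonneg _) hx
    _ ≤ 1 := integral_abs_sub_integral_le_one hμ

lemma integrable_mul_exp_mul (hμ : ∀ᵐ x ∂μ, x ∈ Icc (-1 : ℝ) 1) (hg : Integrable g μ) (t : ℝ) :
    Integrable (fun x => g x * exp (t * x)) μ := by
  refine hg.mul_bdd (by fun_prop) (c := exp |t|) ?_
  filter_upwards [hμ] with x hx
  rw [Real.norm_eq_abs, abs_exp, exp_le_exp]
  calc t * x ≤ |t * x| := le_abs_self _
    _ = |t| * |x| := abs_mul _ _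
    _ ≤ |t| := mul_le_of_le_one_right (abs_nonneg t) (abs_le.2 hx)

lemma hasDerivAt_integral_mul_exp_mul (hμ : ∀ᵐ x ∂μ, x ∈ Icc (-1 : ℝ) 1) (hg : Integrable g μ)
    (t : ℝ) :
    HasDerivAt (fun s => ∫ x, g x * exp (s * x) ∂μ) (∫ x, g x * x * exp (t * x) ∂μ) t := by
  refine (hasDerivAt_integral_of_dominated_loc_of_deriv_le (Metric.ball_mem_nhds t one_pos)
    (F' := fun s x => g x * x * exp (s * x)) (bound := fun x => |g x| * exp (|t| + 1))
    (Filter.Eventually.of_forall fun s => (integrable_mul_exp_mul hμ hg s).aestronglyMeasurable)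
    (integrable_mul_exp_mul hμ hg t)
    (by have := hg.aestronglyMeasurable; fun_prop) ?_ (hg.abs.mul_const _) ?_).2
  · filter_upwards [hμ] with x hx s hs
    have hx1 : |x| ≤ 1 := abs_le.2 hx
    have hs1 : s * x ≤ |t| + 1 := by
      have := abs_sub_abs_le_abs_sub s t
      rw [Metric.mem_ball, Real.dist_eq] at hs
      nlinarith [le_abs_self (s * x), abs_mul s x, abs_nonneg s]
    rw [Real.norm_eq_abs, abs_mul, abs_mul, abs_exp]
    gcongr
    exact mul_le_of_le_one_right (abs_nonneg _) hx1
  · refine Filter.Eventually.of_forall fun x s _ => ?_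
    simpa [mul_assoc, mul_comm x] using (((hasDerivAt_id s).mul_const x).exp).const_mul (g x)

lemma integral_tilted_mul (g : ℝ → ℝ) (t : ℝ) :
    ∫ x, g x ∂μ.tilted (t * ·) = (∫ x, g x * exp (t * x) ∂μ) / ∫ x, exp (t * x) ∂μ := by
  simp_rw [integral_tilted, smul_eq_mul, div_mul_eq_mul_div, mul_comm (exp _)]
  exact integral_div _ _

lemma hasDerivAt_integral_tilted_mul [IsFiniteMeasure μ] [NeZero μ]
    (hμ : ∀ᵐ x ∂μ, x ∈ Icc (-1 : ℝ) 1) (hg : Integrable g μ) (t : ℝ) :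
    HasDerivAt (fun s => ∫ x, g x ∂μ.tilted (s * ·)) cov[g, id; μ.tilted (t * ·)] t := by
  have hexp (s : ℝ) : Integrable (fun x => exp (s * x)) μ :=
    integrable_exp_mul_of_mem_Icc (X := id) aemeasurable_id hμ
  have hZ_ne : ∫ x, exp (t * x) ∂μ ≠ 0 := (integral_exp_pos (hexp t)).ne'
  have hN := hasDerivAt_integral_mul_exp_mul hμ hg t
  have hZ := hasDerivAt_integral_mul_exp_mul hμ (integrable_const 1) t
  simp only [one_mul] at hZ
  have : IsProbabilityMeasure (μ.tilted (t * ·)) := isProbabilityMeasure_tilted (hexp t)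
  have hν : ∀ᵐ x ∂μ.tilted (t * ·), x ∈ Icc (-1 : ℝ) 1 := tilted_absolutelyContinuous μ _ hμ
  have hgν : Integrable g (μ.tilted (t * ·)) := by
    rw [integrable_tilted_iff (hexp t)]
    simpa only [smul_eq_mul, mul_comm (exp _)] using integrable_mul_exp_mul hμ hg t
  have hgxν : Integrable (fun x => g x * x) (μ.tilted (t * ·)) :=
    hgν.mul_bdd aestronglyMeasurable_id (hν.mono fun x hx => abs_le.2 hx)
  simp_rw [integral_tilted_mul g]
  refine (hN.div hZ hZ_ne).congr_deriv ?_
  rw [covariance_id_eq_integral_mul_sub hν hgν]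
  simp_rw [mul_sub]
  rw [integral_sub hgxν (hgν.mul_const _), integral_mul_const, integral_tilted_mul,
    integral_tilted_mul g, integral_tilted_mul (fun y => y)]
  generalize ∫ x, g x * x * exp (t * x) ∂μ = a
  generalize ∫ x, x * exp (t * x) ∂μ = b
  generalize ∫ x, exp (t * x) ∂μ = Z at hZ_ne ⊢
  field_simp

lemma lipschitzWith_integral_tilted_mul [IsFiniteMeasure μ] [NeZero μ]
    (hμ : ∀ᵐ x ∂μ, x ∈ Icc (-1 : ℝ) 1) (hf : LipschitzOnWith 1 f (Icc (-1 : ℝ) 1)) :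
    LipschitzWith 1 fun t => ∫ x, f x ∂μ.tilted (t * ·) := by
  have hderiv := hasDerivAt_integral_tilted_mul hμ (hf.continuousOn.integrable_of_ae_mem_Icc hμ)
  refine lipschitzWith_of_nnnorm_deriv_le (fun t => (hderiv t).differentiableAt) fun t => ?_
  have : IsProbabilityMeasure (μ.tilted (t * ·)) :=
    isProbabilityMeasure_tilted (integrable_exp_mul_of_mem_Icc (X := id) aemeasurable_id hμ)
  rw [(hderiv t).deriv, ← NNReal.coe_le_coe, coe_nnnorm, Real.norm_eq_abs, NNReal.coe_one]
  exact abs_covariance_id_le_of_lipschitzOnWith (tilted_absolutelyContinuous μ _ hμ) hf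

lemma tilt_eq_tilted_tilted {pi0 : Measure ℝ} {c d : ℝ}
    (hV : Integrable (fun x => exp (-(c * (d / 2) * x ^ 2))) pi0) (A : ℝ) :
    tilt pi0 c d A = (pi0.tilted fun x => -(c * (d / 2) * x ^ 2)).tilted (A * ·) := by
  rw [tilted_tilted hV]
  show pi0.tilted _ = _
  congr 1
  funext x
  simp only [Pi.add_apply]
  ring

end

/-- uniformly over `d ≥ 0`, the 1-Wasserstein distance (via Kantorovich
duality: tested against 1-Lipschitz functions on `[-1,1]`) between the tilts at `A₁`
and `A₂` is at most `√2·|A₁ - A₂|`. -/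
theorem wasserstein_tilt_lipschitz (pi0 : Measure ℝ) [IsProbabilityMeasure pi0]
    (hsupp : pi0 (Set.Icc (-1 : ℝ) 1)ᶜ = 0) (c A₁ A₂ : ℝ) :
    ∀ d : ℝ, 0 ≤ d → ∀ f : ℝ → ℝ, LipschitzOnWith 1 f (Set.Icc (-1 : ℝ) 1) →
      |(∫ x, f x ∂tilt pi0 c d A₁) - ∫ x, f x ∂tilt pi0 c d A₂|
        ≤ Real.sqrt 2 * |A₁ - A₂| := by
  intro d _ f hf
  have hpi0 : ∀ᵐ x ∂pi0, x ∈ Icc (-1 : ℝ) 1 := mem_ae_iff.2 hsupp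
  have hV : Integrable (fun x => exp (-(c * (d / 2) * x ^ 2))) pi0 :=
    (by fun_prop : Continuous _).continuousOn.integrable_of_ae_mem_Icc hpi0
  have := isProbabilityMeasure_tilted hV
  have hν : ∀ᵐ x ∂pi0.tilted fun x => -(c * (d / 2) * x ^ 2), x ∈ Icc (-1 : ℝ) 1 :=
    tilted_absolutelyContinuous pi0 _ hpi0
  rw [tilt_eq_tilted_tilted hV, tilt_eq_tilted_tilted hV, ← Real.dist_eq]
  calc _ ≤ 1 * dist A₁ A₂ := (lipschitzWith_integral_tilted_mul hν hf).dist_le_mul A₁ A₂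
    _ ≤ √2 * |A₁ - A₂| := by
        rw [Real.dist_eq]
        gcongr
        exact Real.one_le_sqrt.2 one_le_two
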